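/- arXiv:1210.5539 — 3 statements merged into one kernel-verified Lean document; each statement's English description precedes it below -/
import Mathlib

section
/- Let φ_1, …, φ_n : ℝ → ℝ be escorts and let x, y ∈ ℝ^n have all components in (0,1]. Then the escort divergence D_φ(x, y) = Σ_{i=1}^n ∫_{y_i}^{x_i} (log_{φ_i}(u) − log_{φ_i}(y_i)) du satisfies D_φ(x, x) = 0 and D_φ(x, y) > 0 whenever x ≠ y. -/
open scoped BigOperators

/-- An escort: a real function that is nondecreasing and strictly positive on `(0,1]`. -/
def IsEscort (φ : ℝ → ℝ) : Prop :=
  MonotoneOn φ (Set.Ioc (0:ℝ) 1) ∧ ∀ x ∈ Set.Ioc (0:ℝ) 1, 0 < φ x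

/-- The escort logarithm `log_φ(x) = ∫_1^x dv / φ(v)`. -/
noncomputable def escortLog (φ : ℝ → ℝ) (x : ℝ) : ℝ :=
  ∫ v in (1:ℝ)..x, 1 / φ v

/-- The escort divergence
`D_φ(x, y) = Σ_i ∫_{y_i}^{x_i} (log_{φ_i}(u) − log_{φ_i}(y_i)) du`. -/
noncomputable def escortDiv {n : ℕ} (φ : Fin n → ℝ → ℝ) (x y : Fin n → ℝ) : ℝ :=
  ∑ i, ∫ u in (y i)..(x i), (escortLog (φ i) u - escortLog (φ i) (y i))

lemma escort_uIcc_subset {a b : ℝ} (ha : a ∈ Set.Ioc (0:ℝ) 1) (hb : b ∈ Set.Ioc (0:ℝ) 1) :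
    Set.uIcc a b ⊆ Set.Ioc (0:ℝ) 1 := by
  intro t ht
  rw [Set.mem_uIcc] at ht
  constructor
  · rcases ht with ⟨h1, _⟩ | ⟨h1, _⟩
    · exact lt_of_lt_of_le ha.1 h1
    · exact lt_of_lt_of_le hb.1 h1
  · rcases ht with ⟨_, h2⟩ | ⟨_, h2⟩
    · exact le_trans h2 hb.2
    · exact le_trans h2 ha.2

lemma escort_inv_integrable {φ : ℝ → ℝ} (hφ : IsEscort φ) {a b : ℝ}
    (ha : a ∈ Set.Ioc (0:ℝ) 1) (hb : b ∈ Set.Ioc (0:ℝ) 1) :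
    IntervalIntegrable (fun v => 1 / φ v) MeasureTheory.volume a b := by
  have hsub := escort_uIcc_subset ha hb
  have hanti : AntitoneOn (fun v => 1 / φ v) (Set.uIcc a b) := by
    intro u hu v hv huv
    simp only [one_div]
    exact inv_anti₀ (hφ.2 u (hsub hu)) (hφ.1 (hsub hu) (hsub hv) huv)
  exact hanti.intervalIntegrable

lemma escortLog_lt {φ : ℝ → ℝ} (hφ : IsEscort φ) {a b : ℝ}
    (ha : a ∈ Set.Ioc (0:ℝ) 1) (hb : b ∈ Set.Ioc (0:ℝ) 1) (hab : a < b) :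
    escortLog φ a < escortLog φ b := by
  have h1 : (1:ℝ) ∈ Set.Ioc (0:ℝ) 1 := by constructor <;> norm_num
  have key : escortLog φ b - escortLog φ a = ∫ v in a..b, 1 / φ v := by
    rw [escortLog, escortLog, ← intervalIntegral.integral_interval_sub_left
      (escort_inv_integrable hφ h1 hb) (escort_inv_integrable hφ h1 ha)]
  have hpos : 0 < ∫ v in a..b, 1 / φ v := by
    apply intervalIntegral.intervalIntegral_pos_of_pos_on
      (escort_inv_integrable hφ ha hb) _ hab
    intro t ht
    have htm : t ∈ Set.Ioc (0:ℝ) 1 := ⟨lt_trans ha.1 ht.1, le_trans ht.2.le hb.2⟩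
    exact one_div_pos.mpr (hφ.2 t htm)
  linarith

lemma escortLog_integrable {φ : ℝ → ℝ} (hφ : IsEscort φ) {a b : ℝ}
    (ha : a ∈ Set.Ioc (0:ℝ) 1) (hb : b ∈ Set.Ioc (0:ℝ) 1) :
    IntervalIntegrable (escortLog φ) MeasureTheory.volume a b := by
  have hsub := escort_uIcc_subset ha hb
  have hmono : MonotoneOn (escortLog φ) (Set.uIcc a b) := by
    intro u hu v hv huv
    rcases eq_or_lt_of_le huv with rfl | h
    · exact le_refl _
    · exact (escortLog_lt hφ (hsub hu) (hsub hv) h).le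
  exact hmono.intervalIntegrable

lemma escort_term_pos {φ : ℝ → ℝ} (hφ : IsEscort φ) {a b : ℝ}
    (ha : a ∈ Set.Ioc (0:ℝ) 1) (hb : b ∈ Set.Ioc (0:ℝ) 1) (hab : a ≠ b) :
    0 < ∫ u in a..b, (escortLog φ u - escortLog φ a) := by
  have hint : IntervalIntegrable (fun u => escortLog φ u - escortLog φ a)
      MeasureTheory.volume a b :=
    (escortLog_integrable hφ ha hb).sub intervalIntegrable_const
  rcases lt_or_gt_of_ne hab with h | h
  · apply intervalIntegral.intervalIntegral_pos_of_pos_on hint _ h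
    intro t ht
    have htm : t ∈ Set.Ioc (0:ℝ) 1 := ⟨lt_trans ha.1 ht.1, le_trans ht.2.le hb.2⟩
    have := escortLog_lt hφ ha htm ht.1
    linarith
  · rw [intervalIntegral.integral_symm b a]
    have hneg : 0 < ∫ u in b..a, (escortLog φ a - escortLog φ u) := by
      apply intervalIntegral.intervalIntegral_pos_of_pos_on _ _ h
      · have : IntervalIntegrable (escortLog φ) MeasureTheory.volume b a :=
          escortLog_integrable hφ hb ha
        exact intervalIntegrable_const.sub this
      · intro t ht
        have htm : t ∈ Set.Ioc (0:ℝ) 1 := ⟨lt_trans hb.1 ht.1, le_trans ht.2.le ha.2⟩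
        have := escortLog_lt hφ htm ha ht.2
        linarith
    have : (∫ u in b..a, (escortLog φ a - escortLog φ u))
        = - ∫ u in b..a, (escortLog φ u - escortLog φ a) := by
      rw [← intervalIntegral.integral_neg]
      congr 1
      ext u
      ring
    rw [this] at hneg
    linarith

/-- the escort divergence is an information divergence on vectors with
components in `(0,1]`: it vanishes on the diagonal and is positive off it. -/
theorem escortDiv_eq_zero_and_pos {n : ℕ}
    (φ : Fin n → ℝ → ℝ) (hφ : ∀ i, IsEscort (φ i))
    (x y : Fin n → ℝ)
    (hx : ∀ i, x i ∈ Set.Ioc (0:ℝ) 1) (hy : ∀ i, y i ∈ Set.Ioc (0:ℝ) 1) :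
    escortDiv φ x x = 0 ∧ (x ≠ y → 0 < escortDiv φ x y) := by
  constructor
  · simp [escortDiv, intervalIntegral.integral_same]
  · intro hxy
    obtain ⟨j, hj⟩ : ∃ j, x j ≠ y j := by
      by_contra hc
      push_neg at hc
      exact hxy (funext hc)
    apply Finset.sum_pos'
    · intro i _
      rcases eq_or_ne (y i) (x i) with he | he
      · rw [he, intervalIntegral.integral_same]
      · exact (escort_term_pos (hφ i) (hy i) (hx i) he).le
    · exact ⟨j, Finset.mem_univ j, escort_term_pos (hφ j) (hy j) (hx j) (Ne.symm hj)⟩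
end

section
/- Let φ_1, …, φ_n : ℝ → ℝ be continuous escorts, let x̂ ∈ ℝ^n have all components in (0,1], and let x : I → ℝ^n be a differentiable curve on an open interval I with all components x_i(t) ∈ (0,1]. Then the function t ↦ D_φ(x̂, x(t)) is differentiable and d/dt D_φ(x̂, x(t)) = −Σ_{i=1}^n (x̂_i − x_i(t)) · x_i'(t)/φ_i(x_i(t)). -/
open scoped BigOperators

/-!
Per coordinate, with `L = escortLog φ`, the summand is `∫_y^c (L u - L y) du = ∫_y^c L - (c - y) L(y)`.
By the fundamental theorem of calculus its derivative in `y` is `-L(y) + L(y) - (c - y) L'(y)`,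
and `L'(y) = 1 / φ(y)`. Since `φ` is only controlled on `(0, 1]` and the curve may reach `1`,
these derivatives are taken within a closed interval `[p, 1] ⊆ (0, 1]`, which suffices for the
chain rule because the curve stays in it near `t`.
-/

open Set Filter Topology

section Icc

variable {p q y : ℝ}

theorem hasDerivWithinAt_escortLog_Icc {φ : ℝ → ℝ} (hφ : ContinuousOn φ (Icc p q))
    (hφ₀ : ∀ v ∈ Icc p q, φ v ≠ 0) (h₁ : (1 : ℝ) ∈ Icc p q) (hy : y ∈ Icc p q) :
    HasDerivWithinAt (escortLog φ) (1 / φ y) (Icc p q) y := by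
  have : Fact (y ∈ Icc p q) := ⟨hy⟩
  have hinv : ContinuousOn (fun v => 1 / φ v) (Icc p q) := continuousOn_const.div hφ hφ₀
  exact intervalIntegral.integral_hasDerivWithinAt_right
    (hinv.mono (uIcc_subset_Icc h₁ hy)).intervalIntegrable
    (hinv.stronglyMeasurableAtFilter_nhdsWithin measurableSet_Icc y) (hinv y hy)

theorem hasDerivWithinAt_integral_sub_apply_left_Icc {L : ℝ → ℝ} {L' c : ℝ}
    (hL : ContinuousOn L (Icc p q)) (hc : c ∈ Icc p q) (hy : y ∈ Icc p q)
    (hLy : HasDerivWithinAt L L' (Icc p q) y) :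
    HasDerivWithinAt (fun z => ∫ u in z..c, (L u - L z)) (-((c - y) * L')) (Icc p q) y := by
  have : Fact (y ∈ Icc p q) := ⟨hy⟩
  have hint : HasDerivWithinAt (fun z => ∫ u in z..c, L u) (-L y) (Icc p q) y :=
    intervalIntegral.integral_hasDerivWithinAt_left
      (hL.mono (uIcc_subset_Icc hy hc)).intervalIntegrable
      (hL.stronglyMeasurableAtFilter_nhdsWithin measurableSet_Icc y) (hL y hy)
  have hprod : HasDerivWithinAt (fun z => (c - z) * L z) (-1 * L y + (c - y) * L') (Icc p q) y :=
    ((hasDerivWithinAt_id y _).const_sub c).mul hLy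
  refine (hint.sub hprod).congr_deriv (by ring) |>.congr_of_mem (fun z hz => ?_) hy
  rw [intervalIntegral.integral_sub (hL.mono (uIcc_subset_Icc hz hc)).intervalIntegrable
    intervalIntegrable_const, intervalIntegral.integral_const, smul_eq_mul, Pi.sub_apply]

end Icc

theorem hasDerivAt_integral_escortLog_sub_comp {φ γ : ℝ → ℝ} {c γ' t : ℝ}
    (hφ : ContinuousOn φ (Ioc 0 1)) (hφ₀ : ∀ v ∈ Ioc (0 : ℝ) 1, φ v ≠ 0) (hc : c ∈ Ioc (0 : ℝ) 1)
    (hγ : HasDerivAt γ γ' t) (hγ_mem : ∀ᶠ s in 𝓝 t, γ s ∈ Ioc (0 : ℝ) 1) :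
    HasDerivAt (fun s => ∫ u in γ s..c, (escortLog φ u - escortLog φ (γ s)))
      (-((c - γ t) * (1 / φ (γ t))) * γ') t := by
  have hγt : γ t ∈ Ioc (0 : ℝ) 1 := hγ_mem.self_of_nhds
  obtain ⟨p, hp₀, hp⟩ := exists_between (lt_min hc.1 hγt.1)
  rw [lt_min_iff] at hp
  have hsub : Icc p 1 ⊆ Ioc (0 : ℝ) 1 := Icc_subset_Ioc hp₀ le_rfl
  have hmem : ∀ v ∈ Ioc (0 : ℝ) 1, p < v → v ∈ Icc p 1 := fun v hv hpv => ⟨hpv.le, hv.2⟩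
  have hlog : ∀ y ∈ Icc p 1, HasDerivWithinAt (escortLog φ) (1 / φ y) (Icc p 1) y :=
    fun y hy => hasDerivWithinAt_escortLog_Icc (hφ.mono hsub) (fun v hv => hφ₀ v (hsub hv))
      (hmem 1 ⟨zero_lt_one, le_rfl⟩ (hp.1.trans_le hc.2)) hy
  have hev : ∀ᶠ s in 𝓝 t, γ s ∈ Icc p 1 := by
    filter_upwards [hγ_mem, hγ.continuousAt.eventually (lt_mem_nhds hp.2)] with s hs hps
    exact hmem _ hs hps
  exact (hasDerivWithinAt_integral_sub_apply_left_Icc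
    (fun z hz => (hlog z hz).continuousWithinAt) (hmem c hc hp.1) (hmem _ hγt hp.2)
    (hlog _ (hmem _ hγt hp.2))).comp_hasDerivAt t hγ hev

/-- continuous-time derivative of the escort divergence along a
differentiable curve with values componentwise in `(0,1]`:
`d/dt D_φ(x̂, x(t)) = −Σ_i (x̂_i − x_i(t)) · x_i'(t)/φ_i(x_i(t))`. -/
theorem escortDiv_hasDerivAt {n : ℕ}
    (φ : Fin n → ℝ → ℝ) (hφ : ∀ i, IsEscort (φ i))
    (hcont : ∀ i, ContinuousOn (φ i) (Set.Ioc (0:ℝ) 1))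
    (xhat : Fin n → ℝ) (hxhat : ∀ i, xhat i ∈ Set.Ioc (0:ℝ) 1)
    (a b : ℝ) (x x' : ℝ → Fin n → ℝ)
    (hx : ∀ t ∈ Set.Ioo a b, ∀ i, x t i ∈ Set.Ioc (0:ℝ) 1)
    (hderiv : ∀ t ∈ Set.Ioo a b, ∀ i, HasDerivAt (fun s => x s i) (x' t i) t) :
    ∀ t ∈ Set.Ioo a b,
      HasDerivAt (fun s => escortDiv φ xhat (x s))
        (-∑ i, (xhat i - x t i) * x' t i / φ i (x t i)) t := by
  intro t ht
  have hx_ev : ∀ᶠ s in 𝓝 t, ∀ i, x s i ∈ Ioc (0 : ℝ) 1 :=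
    eventually_of_mem (isOpen_Ioo.mem_nhds ht) hx
  have hterm : ∀ i, HasDerivAt (fun s => ∫ u in x s i..xhat i,
      (escortLog (φ i) u - escortLog (φ i) (x s i)))
      (-((xhat i - x t i) * (1 / φ i (x t i))) * x' t i) t := fun i =>
    hasDerivAt_integral_escortLog_sub_comp (hcont i) (fun v hv => ((hφ i).2 v hv).ne')
      (hxhat i) (hderiv t ht i) (hx_ev.mono fun s hs => hs i)
  refine (HasDerivAt.fun_sum fun i _ => hterm i).congr_deriv ?_
  rw [← Finset.sum_neg_distrib]
  exact Finset.sum_congr rfl fun i _ => by ring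
end

section
/- Let φ_1, …, φ_n be continuous escorts with escort exponentials exp_{φ_i} (inverses of log_{φ_i}), let ψ : ℝ^n → ℝ^n be an incentive, and let v_1, …, v_n, G : I → ℝ be differentiable functions on an open interval I such that x_i(t) := exp_{φ_i}(v_i(t) − G(t)) is well defined with x_i(t) ∈ (0,1]. If v̇_i(t) = ψ_i(x(t))/φ_i(x_i(t)) and Ġ(t) = Σ_j ψ_j(x(t)) / Σ_j φ_j(x_j(t)) for all t, then x(t) solves the escort incentive dynamic: ẋ_i(t) = ψ_i(x(t)) − φ̂_i(x(t))·Σ_j ψ_j(x(t)), where φ̂_i(x) = φ_i(x_i)/Σ_j φ_j(x_j). -/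
open scoped BigOperators

/-- if `x_i(t) = exp_{φ_i}(v_i(t) − G(t))` (where `exp_{φ_i}` is the
inverse of `log_{φ_i}`, satisfying `(exp_φ)' = φ ∘ exp_φ`) and the auxiliary
equations `v̇_i = ψ_i(x)/φ_i(x_i)`, `Ġ = Σ_j ψ_j(x)/Σ_j φ_j(x_j)` hold, then `x`
solves the escort incentive dynamic. -/
theorem escortExp_solves_escort_incentive {n : ℕ}
    (φ : Fin n → ℝ → ℝ) (hφ : ∀ i, IsEscort (φ i))
    (hcont : ∀ i, ContinuousOn (φ i) (Set.Ioc (0:ℝ) 1))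
    (E : Fin n → ℝ → ℝ)
    (hEinv : ∀ i, ∀ u ∈ Set.Ioc (0:ℝ) 1, E i (escortLog (φ i) u) = u)
    (ψ : (Fin n → ℝ) → (Fin n → ℝ))
    (a b : ℝ) (v : Fin n → ℝ → ℝ) (G : ℝ → ℝ)
    (x : ℝ → Fin n → ℝ)
    (hxdef : ∀ t i, x t i = E i (v i t - G t))
    (hxmem : ∀ t ∈ Set.Ioo a b, ∀ i, x t i ∈ Set.Ioc (0:ℝ) 1)
    (hEderiv : ∀ i, ∀ t ∈ Set.Ioo a b,
      HasDerivAt (E i) (φ i (E i (v i t - G t))) (v i t - G t))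
    (hv : ∀ i, ∀ t ∈ Set.Ioo a b,
      HasDerivAt (v i) (ψ (x t) i / φ i (x t i)) t)
    (hG : ∀ t ∈ Set.Ioo a b,
      HasDerivAt G ((∑ j, ψ (x t) j) / ∑ j, φ j (x t j)) t) :
    ∀ t ∈ Set.Ioo a b, ∀ i,
      HasDerivAt (fun s => x s i)
        (ψ (x t) i - (φ i (x t i) / ∑ j, φ j (x t j)) * ∑ j, ψ (x t) j) t := by
  intro t ht i
  have hφpos : 0 < φ i (x t i) := (hφ i).2 _ (hxmem t ht i)
  have hinner : HasDerivAt (fun s => v i s - G s)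
      (ψ (x t) i / φ i (x t i) - (∑ j, ψ (x t) j) / ∑ j, φ j (x t j)) t :=
    (hv i t ht).sub (hG t ht)
  have hcomp : HasDerivAt (fun s => E i (v i s - G s))
      (φ i (E i (v i t - G t)) *
        (ψ (x t) i / φ i (x t i) - (∑ j, ψ (x t) j) / ∑ j, φ j (x t j))) t :=
    (hEderiv i t ht).comp t hinner
  have hx : E i (v i t - G t) = x t i := (hxdef t i).symm
  rw [hx] at hcomp
  have : HasDerivAt (fun s => x s i)
      (φ i (x t i) *
        (ψ (x t) i / φ i (x t i) - (∑ j, ψ (x t) j) / ∑ j, φ j (x t j))) t := by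
    refine hcomp.congr_of_eventuallyEq ?_
    filter_upwards with s using (hxdef s i)
  convert this using 1
  field_simp
end
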